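/- arXiv:1911.09080 — 2 statements merged into one kernel-verified Lean document; each statement's English description precedes it below -/
import Mathlib

section
/- Let A be an n×n Hermitian matrix and M its principal submatrix obtained by deleting the first row and first column. If all n eigenvalues of A are simple and v_i denotes the first coordinate of a unit eigenvector for λ_i(A), then the characteristic polynomial of M satisfies det(M − λI) = Σ_{i=1}^n |v_i|² ∏_{k≠i} (λ_k(A) − λ) for all λ ∈ ℂ. -/
/-!
Distinct eigenvalues force the normalized eigenvectors `v i` to be orthonormal, so the matrix `U`
with columns `v i` is unitary and `A - λ = U diag(λₖ - λ) U*`. The determinant of `M - λ` is the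
`(0, 0)` cofactor of `A - λ`, i.e. `adj(A - λ)₀₀`. The adjugate commutes with unitary conjugation
and `adj diag(d) = diag(∏_{k ≠ i} dₖ)`, so reading off the `(0, 0)` entry gives the sum. Working
with the adjugate instead of the resolvent makes this a polynomial identity from the start, with
no need to avoid the eigenvalues.
-/

open Matrix Finset

namespace Matrix

variable {n 𝕜 : Type*} [Fintype n] [RCLike 𝕜]

theorem star_dotProduct_self_eq_sum_norm_sq (x : n → 𝕜) :
    star x ⬝ᵥ x = ∑ j, (‖x j‖ ^ 2 : 𝕜) := by
  simp only [dotProduct, Pi.star_apply, RCLike.star_def, RCLike.conj_mul]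

theorem IsHermitian.star_dotProduct_eq_zero_of_mulVec_eq_smul {A : Matrix n n 𝕜}
    (hA : A.IsHermitian) {a b : ℝ} (hab : a ≠ b) {x y : n → 𝕜}
    (hx : A *ᵥ x = (a : 𝕜) • x) (hy : A *ᵥ y = (b : 𝕜) • y) : star x ⬝ᵥ y = 0 := by
  have hAx : star x ᵥ* A = (a : 𝕜) • star x := by
    rw [← hA.eq, ← star_mulVec, hx, star_smul, RCLike.star_def, RCLike.conj_ofReal]
  have key : ((b : 𝕜) - a) * (star x ⬝ᵥ y) = 0 := by
    rw [sub_mul, ← smul_eq_mul, ← dotProduct_smul, ← hy, dotProduct_mulVec, hAx,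
      smul_dotProduct, smul_eq_mul, sub_self]
  exact (mul_eq_zero.mp key).resolve_left (sub_ne_zero.mpr (mod_cast hab.symm))

variable [DecidableEq n]

theorem transpose_of_mem_unitaryGroup_of_star_dotProduct {v : n → n → 𝕜}
    (hv : ∀ i j, star (v i) ⬝ᵥ v j = (1 : Matrix n n 𝕜) i j) :
    (of v)ᵀ ∈ unitaryGroup n 𝕜 := by
  rw [mem_unitaryGroup_iff']
  ext i j
  rw [← hv]
  simp [mul_apply, dotProduct]

theorem IsHermitian.transpose_of_mem_unitaryGroup_of_mulVec_eq_smul {A : Matrix n n 𝕜}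
    (hA : A.IsHermitian) {μ : n → ℝ} (hμ : Function.Injective μ) {v : n → n → 𝕜}
    (hnorm : ∀ i, ∑ j, ‖v i j‖ ^ 2 = 1) (hv : ∀ i, A *ᵥ v i = (μ i : 𝕜) • v i) :
    (of v)ᵀ ∈ unitaryGroup n 𝕜 := by
  refine transpose_of_mem_unitaryGroup_of_star_dotProduct fun i j => ?_
  obtain rfl | hij := eq_or_ne i j
  · rw [star_dotProduct_self_eq_sum_norm_sq, one_apply_eq]
    exact_mod_cast hnorm i
  · rw [one_apply_ne hij]
    exact hA.star_dotProduct_eq_zero_of_mulVec_eq_smul (hμ.ne hij) (hv i) (hv j)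

theorem mul_transpose_of_eq_of_mulVec_eq_smul {R : Type*} [CommSemiring R] {A : Matrix n n R}
    {v : n → n → R} {μ : n → R} (hv : ∀ i, A *ᵥ v i = μ i • v i) :
    A * (of v)ᵀ = (of v)ᵀ * diagonal μ := by
  ext k i
  rw [mul_diagonal, mul_comm]
  simpa [mul_apply, mulVec, dotProduct] using congrFun (hv i) k

theorem mul_diagonal_mul_star_sub_smul_one {R : Type*} [CommRing R] [StarRing R]
    {U : Matrix n n R} (hU : U ∈ unitaryGroup n R) (d : n → R) (c : R) :
    U * diagonal d * star U - c • 1 = U * diagonal (fun k => d k - c) * star U := by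
  rw [← diagonal_sub, ← smul_one_eq_diagonal, Matrix.mul_sub, Matrix.sub_mul, Matrix.mul_smul,
    mul_one, Matrix.smul_mul, mem_unitaryGroup_iff.mp hU]

theorem adjugate_of_mem_unitaryGroup {R : Type*} [CommRing R] [StarRing R]
    {U : Matrix n n R} (hU : U ∈ unitaryGroup n R) : adjugate U = U.det • star U := by
  calc adjugate U = adjugate U * (U * star U) := by rw [mem_unitaryGroup_iff.mp hU, mul_one]
    _ = U.det • star U := by rw [← Matrix.mul_assoc, adjugate_mul, smul_one_mul]

theorem adjugate_mul_mul_star_of_mem_unitaryGroup {R : Type*} [CommRing R] [StarRing R]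
    {U : Matrix n n R} (hU : U ∈ unitaryGroup n R) (D : Matrix n n R) :
    adjugate (U * D * star U) = U * adjugate D * star U := by
  have hdet : star U.det * U.det = 1 := by
    rw [← det_conjTranspose, ← det_mul, ← star_eq_conjTranspose, mem_unitaryGroup_iff'.mp hU,
      det_one]
  have hadj_star : adjugate (star U) = star U.det • U := by
    rw [star_eq_conjTranspose, ← adjugate_conjTranspose, ← star_eq_conjTranspose,
      adjugate_of_mem_unitaryGroup hU, star_smul, star_star]
  rw [adjugate_mul_distrib, adjugate_mul_distrib, hadj_star, adjugate_of_mem_unitaryGroup hU,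
    Matrix.smul_mul, Matrix.mul_smul, Matrix.mul_smul, smul_smul, hdet, one_smul,
    Matrix.mul_assoc]

theorem mul_diagonal_mul_star_apply_self (U : Matrix n n 𝕜) (d : n → 𝕜) (i : n) :
    (U * diagonal d * star U) i i = ∑ k, (‖U i k‖ ^ 2 : 𝕜) * d k := by
  rw [mul_apply]
  refine sum_congr rfl fun k _ => ?_
  rw [mul_diagonal, star_apply, RCLike.star_def, ← RCLike.mul_conj]
  ring

theorem adjugate_apply_zero_zero {R : Type*} [CommRing R] {m : ℕ}
    (A : Matrix (Fin (m + 1)) (Fin (m + 1)) R) :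
    adjugate A 0 0 = (A.submatrix Fin.succ Fin.succ).det := by
  simp [adjugate_fin_succ_eq_det_submatrix]

end Matrix

theorem stmt_8 (n : ℕ) (A : Matrix (Fin (n + 1)) (Fin (n + 1)) ℂ)
    (hA : A.IsHermitian)
    (hdist : Function.Injective hA.eigenvalues)
    (v : Fin (n + 1) → Fin (n + 1) → ℂ)
    (hnorm : ∀ i, ∑ j, ‖v i j‖ ^ 2 = 1)
    (hv : ∀ i, A.mulVec (v i) = (hA.eigenvalues i : ℂ) • v i) :
    ∀ lam : ℂ,
      (A.submatrix Fin.succ Fin.succ - lam • 1).det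
        = ∑ i, (‖v i 0‖ ^ 2 : ℂ)
            * ∏ k ∈ Finset.univ.erase i, ((hA.eigenvalues k : ℂ) - lam) := by
  intro lam
  set μ : Fin (n + 1) → ℂ := fun k => (hA.eigenvalues k : ℂ)
  set U := (of v)ᵀ
  have hU : U ∈ unitaryGroup _ ℂ :=
    hA.transpose_of_mem_unitaryGroup_of_mulVec_eq_smul hdist hnorm hv
  have hAU : A = U * diagonal μ * star U := by
    rw [← mul_transpose_of_eq_of_mulVec_eq_smul hv, Matrix.mul_assoc,
      mem_unitaryGroup_iff.mp hU, mul_one]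
  calc (A.submatrix Fin.succ Fin.succ - lam • 1).det
      = adjugate (A - lam • 1) 0 0 := by
        rw [adjugate_apply_zero_zero]
        simp [submatrix_sub, submatrix_smul, submatrix_one _ (Fin.succ_injective _)]
    _ = adjugate (U * diagonal (fun k => μ k - lam) * star U) 0 0 := by
        rw [← mul_diagonal_mul_star_sub_smul_one hU, ← hAU]
    _ = _ := by
        rw [adjugate_mul_mul_star_of_mem_unitaryGroup hU, adjugate_diagonal,
          mul_diagonal_mul_star_apply_self]
        rfl
end

section
/- Let A be an n×n Hermitian matrix, j ∈ {1,…,n}, and M_j the (n−1)×(n−1) matrix obtained by deleting the j-th row and j-th column of A. Let v_{i,j} denote the j-th coordinate of a unit eigenvector of A for eigenvalue λ_i(A). Then |v_{i,j}|² · ∏_{k≠i}(λ_i(A) − λ_k(A)) = ∏_{k=1}^{n−1}(λ_i(A) − λ_k(M_j)). -/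
/-!
Compute the `(j, j)` entry of the adjugate of `λᵢ(A) • 1 - A` in two ways. Expanding along row `j`
gives the principal minor `det (λᵢ(A) • 1 - M_j) = ∏ₖ (λᵢ(A) - λₖ(M_j))`. Diagonalising
`A = U D U*` gives `adj (λᵢ(A) • 1 - A) = U adj (λᵢ(A) • 1 - D) U*`, and the `l`-th entry of the
diagonal matrix `adj (λᵢ(A) • 1 - D)` is `∏_{k ≠ l} (λᵢ(A) - λₖ(A))`, which vanishes for `l ≠ i`;
so the entry is `|U_{j,i}|² ∏_{k ≠ i} (λᵢ(A) - λₖ(A))`. Either this product is zero, or `λᵢ(A)`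
is simple, its eigenspace is the line through the `i`-th column of `U`, and `|v_j| = |U_{j,i}|`.
-/

open Matrix Finset

namespace Matrix

section CommRing

variable {R : Type*} [CommRing R] {m : Type*} [Fintype m] [DecidableEq m]

theorem adjugate_mul_mul_of_mul_eq_one {U V : Matrix m m R} (hUV : U * V = 1) (hVU : V * U = 1)
    (M : Matrix m m R) : adjugate (U * M * V) = U * adjugate M * V := by
  have adjugate_eq_det_smul {P Q : Matrix m m R} (hPQ : P * Q = 1) : adjugate P = P.det • Q := by
    rw [← mul_one (adjugate P), ← hPQ, ← mul_assoc, adjugate_mul, smul_mul, one_mul]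
  have hdet : U.det * V.det = 1 := by rw [← det_mul, hUV, det_one]
  rw [adjugate_mul_distrib, adjugate_mul_distrib, adjugate_eq_det_smul hVU,
    adjugate_eq_det_smul hUV]
  simp only [Matrix.smul_mul, Matrix.mul_smul, smul_smul, hdet, one_smul, Matrix.mul_assoc]

theorem adjugate_fin_succ_apply_self {n : ℕ} (A : Matrix (Fin (n + 1)) (Fin (n + 1)) R)
    (j : Fin (n + 1)) : adjugate A j j = det (A.submatrix j.succAbove j.succAbove) := by
  rw [adjugate_fin_succ_eq_det_submatrix, ← two_mul, pow_mul, neg_one_sq, one_pow, one_mul]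

theorem submatrix_scalar_sub {l : Type*} [Fintype l] [DecidableEq l] (c : R) (A : Matrix m m R)
    {f : l → m} (hf : Function.Injective f) :
    (scalar m c - A).submatrix f f = scalar l c - A.submatrix f f := by
  rw [scalar_apply, scalar_apply, submatrix_sub, Pi.sub_apply, Pi.sub_apply,
    submatrix_diagonal _ _ hf]
  rfl

end CommRing

namespace IsHermitian

variable {𝕜 : Type*} [RCLike 𝕜] {m : Type*} [Fintype m] [DecidableEq m] {A : Matrix m m 𝕜}
  (hA : A.IsHermitian)

theorem det_scalar_sub (c : 𝕜) : det (scalar m c - A) = ∏ k, (c - hA.eigenvalues k) := by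
  rw [← eval_charpoly, hA.charpoly_eq, Polynomial.eval_prod]
  simp

theorem scalar_sub_eq_conj_diagonal (c : 𝕜) :
    scalar m c - A = (hA.eigenvectorUnitary : Matrix m m 𝕜) *
      diagonal (fun k => c - hA.eigenvalues k) * star (hA.eigenvectorUnitary : Matrix m m 𝕜) := by
  have hU := Unitary.mul_star_self_of_mem hA.eigenvectorUnitary.2
  have hdiag : diagonal (fun k => c - hA.eigenvalues k) =
      scalar m c - diagonal (RCLike.ofReal ∘ hA.eigenvalues) := by
    rw [scalar_apply, diagonal_sub]
    rfl
  conv_lhs => rw [hA.spectral_theorem, Unitary.conjStarAlgAut_apply]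
  rw [hdiag, Matrix.mul_sub, Matrix.sub_mul, ← scalar_commute c (Commute.all c),
    Matrix.mul_assoc (scalar m c), hU, mul_one]

theorem adjugate_scalar_sub (c : 𝕜) :
    Matrix.adjugate (scalar m c - A) = (hA.eigenvectorUnitary : Matrix m m 𝕜) *
      diagonal (fun l => ∏ k ∈ univ.erase l, (c - hA.eigenvalues k)) *
      star (hA.eigenvectorUnitary : Matrix m m 𝕜) := by
  rw [hA.scalar_sub_eq_conj_diagonal, adjugate_mul_mul_of_mul_eq_one
    (Unitary.coe_mul_star_self _) (Unitary.coe_star_mul_self _), adjugate_diagonal]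

theorem adjugate_scalar_eigenvalue_sub_apply_self (i j : m) :
    Matrix.adjugate (scalar m (hA.eigenvalues i : 𝕜) - A) j j =
      ‖(hA.eigenvectorUnitary : Matrix m m 𝕜) j i‖ ^ 2 *
        ∏ k ∈ univ.erase i, ((hA.eigenvalues i : 𝕜) - hA.eigenvalues k) := by
  rw [hA.adjugate_scalar_sub, mul_apply, Fintype.sum_eq_single i]
  · rw [mul_diagonal, star_apply, RCLike.star_def, mul_right_comm, RCLike.mul_conj, mul_comm]
  · intro l hl
    rw [mul_diagonal, prod_eq_zero (mem_erase.mpr ⟨Ne.symm hl, mem_univ i⟩) (sub_self _), mul_zero,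
      zero_mul]

theorem eq_smul_eigenvectorBasis_of_simple {i : m}
    (hsimple : ∀ k ≠ i, hA.eigenvalues k ≠ hA.eigenvalues i) {v : m → 𝕜}
    (hv : A *ᵥ v = (hA.eigenvalues i : 𝕜) • v) :
    v = (star (hA.eigenvectorUnitary : Matrix m m 𝕜) *ᵥ v) i • ⇑(hA.eigenvectorBasis i) := by
  set U : Matrix m m 𝕜 := (hA.eigenvectorUnitary : Matrix m m 𝕜)
  set w := star U *ᵥ v
  have hUw : U *ᵥ w = v := by
    rw [mulVec_mulVec, Unitary.mul_star_self_of_mem hA.eigenvectorUnitary.2, one_mulVec]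
  have hw : diagonal (RCLike.ofReal ∘ hA.eigenvalues) *ᵥ w = (hA.eigenvalues i : 𝕜) • w := by
    rw [← hA.conjStarAlgAut_star_eigenvectorUnitary, Unitary.conjStarAlgAut_star_apply,
      ← mulVec_mulVec, hUw, ← mulVec_mulVec, hv, mulVec_smul]
  have hw_single : w = Pi.single i (w i) := by
    funext k
    by_cases hk : k = i
    · subst hk; simp
    · have hwk := congrFun hw k
      simp only [mulVec_diagonal, Function.comp_apply, Pi.smul_apply, smul_eq_mul] at hwk
      rw [Pi.single_eq_of_ne hk]
      exact (mul_eq_mul_right_iff.mp hwk).resolve_left (by exact_mod_cast hsimple k hk)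
  rw [← hUw, hw_single, mulVec_single, op_smul_eq_smul, eigenvectorUnitary_col_eq,
    Pi.single_eq_same]

theorem norm_sq_apply_eq_of_simple {i : m}
    (hsimple : ∀ k ≠ i, hA.eigenvalues k ≠ hA.eigenvalues i) {v : m → 𝕜}
    (hnorm : ∑ l, ‖v l‖ ^ 2 = 1) (hv : A *ᵥ v = (hA.eigenvalues i : 𝕜) • v) (j : m) :
    ‖v j‖ ^ 2 = ‖(hA.eigenvectorUnitary : Matrix m m 𝕜) j i‖ ^ 2 := by
  obtain ⟨a, hva⟩ : ∃ a : 𝕜, v = a • ⇑(hA.eigenvectorBasis i) :=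
    ⟨_, hA.eq_smul_eigenvectorBasis_of_simple hsimple hv⟩
  have he : ∑ l, ‖hA.eigenvectorBasis i l‖ ^ 2 = 1 := by
    rw [← EuclideanSpace.norm_sq_eq, hA.eigenvectorBasis.norm_eq_one, one_pow]
  have ha : ‖a‖ ^ 2 = 1 := by
    rw [← hnorm, hva]
    simp only [Pi.smul_apply, smul_eq_mul, norm_mul, mul_pow, ← mul_sum, he, mul_one]
  rw [hva, Pi.smul_apply, smul_eq_mul, norm_mul, mul_pow, ha, one_mul, eigenvectorUnitary_apply]

end IsHermitian

end Matrix

theorem stmt_10 (n : ℕ) (A : Matrix (Fin (n + 1)) (Fin (n + 1)) ℂ)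
    (hA : A.IsHermitian) (j : Fin (n + 1)) (i : Fin (n + 1))
    (v : Fin (n + 1) → ℂ)
    (hnorm : ∑ l, ‖v l‖ ^ 2 = 1)
    (hv : A.mulVec v = (hA.eigenvalues i : ℂ) • v) :
    ‖v j‖ ^ 2 * ∏ k ∈ Finset.univ.erase i, (hA.eigenvalues i - hA.eigenvalues k)
      = ∏ k : Fin n,
          (hA.eigenvalues i - (hA.submatrix j.succAbove).eigenvalues k) := by
  have hminor : adjugate (scalar _ (hA.eigenvalues i : ℂ) - A) j j =
      ∏ k : Fin n, ((hA.eigenvalues i : ℂ) - (hA.submatrix j.succAbove).eigenvalues k) := by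
    rw [adjugate_fin_succ_apply_self, submatrix_scalar_sub _ _ Fin.succAbove_right_injective,
      (hA.submatrix j.succAbove).det_scalar_sub]
    rfl -- the casts `RCLike.ofReal` and `Complex.ofReal` agree only after unfolding
  have hnorm_mul : ‖v j‖ ^ 2 * ∏ k ∈ univ.erase i, (hA.eigenvalues i - hA.eigenvalues k) =
      ‖(hA.eigenvectorUnitary : Matrix _ _ ℂ) j i‖ ^ 2 *
        ∏ k ∈ univ.erase i, (hA.eigenvalues i - hA.eigenvalues k) := by
    by_cases hP : ∏ k ∈ univ.erase i, (hA.eigenvalues i - hA.eigenvalues k) = 0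
    · rw [hP, mul_zero, mul_zero]
    · have hsimple : ∀ k ≠ i, hA.eigenvalues k ≠ hA.eigenvalues i := fun k hk heq =>
        hP (prod_eq_zero (mem_erase.mpr ⟨hk, mem_univ k⟩) (by rw [heq, sub_self]))
      rw [hA.norm_sq_apply_eq_of_simple hsimple hnorm hv j]
  rw [hnorm_mul]
  apply Complex.ofReal_injective
  push_cast
  exact (hA.adjugate_scalar_eigenvalue_sub_apply_self i j).symm.trans hminor
end
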